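/- arXiv:1303.5521 — 2 statements merged into one kernel-verified Lean document; each statement's English description precedes it below -/
import Mathlib

section
/- Let n ≥ 3 and 0 < 2γ < n - 2. Then the weighted measure μ(A) = ∫_{A ∩ ℝ₊ⁿ} |x|^{-2γ} dx satisfies the volume doubling property: there exists c > 0 such that μ(B(x₀, 2R)) ≤ c · μ(B(x₀, R)) for all x₀ ∈ closure(ℝ₊ⁿ) and R > 0. -/
/-!
On a ball `B(x₀, R)` that meets the half-space `{0 < ⟪x, e⟫}` with `0 ≤ ⟪x₀, e⟫`, the half-space
contains the ball `B(x₀ + (R/2) e, R/2)`, on which the weight `‖x‖^(-p)` is at least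
`(‖x₀‖ + R)^(-p)`; this bounds the small integral from below by `(‖x₀‖ + R)^(-p) R^d` up to a
constant. For the large integral there are two regimes. Far from the origin (`4R ≤ ‖x₀‖`) the weight
is comparable to `‖x₀‖^(-p)` on all of `B(x₀, 2R)`. Near the origin `B(x₀, 2R) ⊆ B(0, 6R)`, and
integrating in polar coordinates gives `∫_{B(0,ρ)} ‖x‖^(-p) = d/(d-p) |B(0,1)| ρ^(d-p)`, which is
finite because `p < d`.
-/

open MeasureTheory Metric Set Module Real

theorem setIntegral_Ioi_pow_smul_indicator_rpow_neg {p : ℝ} {d : ℕ} (hd : 1 ≤ d) (hp : p < d)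
    {ρ : ℝ} (hρ : 0 < ρ) :
    ∫ y in Ioi (0 : ℝ), y ^ (d - 1) • (Iio ρ).indicator (fun t : ℝ => t ^ (-p)) y =
      ρ ^ ((d : ℝ) - p) / (d - p) := by
  have hpow : EqOn (fun y : ℝ => y ^ (d - 1) * y ^ (-p)) (fun y => y ^ ((d : ℝ) - p - 1))
      (Ioo 0 ρ) := by
    intro y hy
    dsimp only
    rw [← rpow_natCast, ← rpow_add hy.1, Nat.cast_sub hd]
    ring_nf
  have hind : (fun y : ℝ => y ^ (d - 1) • (Iio ρ).indicator (fun t : ℝ => t ^ (-p)) y) =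
      (Iio ρ).indicator (fun y : ℝ => y ^ (d - 1) * y ^ (-p)) := by
    ext y
    simp [indicator]
  rw [hind, setIntegral_indicator measurableSet_Iio, Ioi_inter_Iio,
    setIntegral_congr_fun measurableSet_Ioo hpow, ← integral_Ioc_eq_integral_Ioo,
    ← intervalIntegral.integral_of_le hρ.le, integral_rpow (by left; linarith),
    zero_rpow (by linarith)]
  ring_nf

section Radial

variable {E : Type*} [NormedAddCommGroup E] [NormedSpace ℝ E] [FiniteDimensional ℝ E]
  [MeasurableSpace E] [BorelSpace E] (μ : Measure E) [μ.IsAddHaarMeasure] {p : ℝ}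

theorem measureReal_ball_of_pos (x : E) {r : ℝ} (hr : 0 < r) :
    μ.real (ball x r) = r ^ finrank ℝ E * μ.real (ball 0 1) := by
  rw [measureReal_def, μ.addHaar_ball_of_pos x hr, ENNReal.toReal_mul,
    ENNReal.toReal_ofReal (by positivity), measureReal_def]

theorem integral_ball_norm_rpow_neg [Nontrivial E] (hp : p < finrank ℝ E) {ρ : ℝ} (hρ : 0 < ρ) :
    ∫ x in ball (0 : E) ρ, ‖x‖ ^ (-p) ∂μ =
      finrank ℝ E / (finrank ℝ E - p) * μ.real (ball 0 1) * ρ ^ (finrank ℝ E - p) := by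
  have hradial : ∫ x in ball (0 : E) ρ, ‖x‖ ^ (-p) ∂μ =
      ∫ x, (Iio ρ).indicator (fun t : ℝ => t ^ (-p)) ‖x‖ ∂μ := by
    rw [← integral_indicator measurableSet_ball]
    congr 1 with x
    simp [indicator]
  rw [hradial, integral_fun_norm_addHaar,
    setIntegral_Ioi_pow_smul_indicator_rpow_neg finrank_pos hp hρ, nsmul_eq_mul, smul_eq_mul]
  ring

theorem integrableOn_norm_rpow_neg (hp : p < finrank ℝ E) {s : Set E}
    (hs : Bornology.IsBounded s) : IntegrableOn (fun x => ‖x‖ ^ (-p)) s μ := by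
  nontriviality E
  obtain ⟨ρ, hρ, hsρ⟩ := hs.subset_ball_lt 0 0
  -- the integral over `ball 0 ρ` is positive, hence not the junk value of a non-integrable function
  refine IntegrableOn.mono_set (Integrable.of_integral_ne_zero ?_) hsρ
  rw [integral_ball_norm_rpow_neg μ hp hρ]
  have hd : 0 < (finrank ℝ E : ℝ) - p := sub_pos.2 hp
  have hv : 0 < μ.real (ball (0 : E) 1) :=
    ENNReal.toReal_pos (measure_ball_pos μ 0 one_pos).ne' measure_ball_lt_top.ne
  have : (0 : ℝ) < finrank ℝ E := by exact_mod_cast finrank_pos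
  positivity

theorem setIntegral_ball_norm_rpow_neg_le [Nontrivial E] (hp : p < finrank ℝ E) (x₀ : E)
    {r : ℝ} (hr : 0 < r) :
    ∫ x in ball x₀ r, ‖x‖ ^ (-p) ∂μ ≤
      finrank ℝ E / (finrank ℝ E - p) * μ.real (ball 0 1) * (‖x₀‖ + r) ^ (finrank ℝ E - p) := by
  have hsub : ball x₀ r ⊆ ball 0 (‖x₀‖ + r) := by
    intro x hx
    rw [mem_ball, dist_eq_norm] at hx
    rw [mem_ball_zero_iff]
    linarith [norm_le_norm_add_norm_sub' x x₀]
  rw [← integral_ball_norm_rpow_neg μ hp (by positivity)]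
  exact setIntegral_mono_set (integrableOn_norm_rpow_neg μ hp isBounded_ball)
    (ae_of_all _ fun x => rpow_nonneg (norm_nonneg x) _) hsub.eventuallyLE

theorem setIntegral_ball_norm_rpow_neg_le_of_lt_norm (hp : 0 ≤ p) {x₀ : E} {r : ℝ}
    (hr : 0 < r) (hrx : r < ‖x₀‖) :
    ∫ x in ball x₀ r, ‖x‖ ^ (-p) ∂μ ≤
      (‖x₀‖ - r) ^ (-p) * (r ^ finrank ℝ E * μ.real (ball 0 1)) := by
  rw [← measureReal_ball_of_pos μ x₀ hr]
  refine (Real.le_norm_self _).trans (norm_setIntegral_le_of_norm_le_const measure_ball_lt_top ?_)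
  intro x hx
  rw [mem_ball, dist_eq_norm] at hx
  rw [norm_of_nonneg (rpow_nonneg (norm_nonneg x) _)]
  exact rpow_le_rpow_of_nonpos (by linarith)
    (by linarith [norm_le_norm_add_norm_sub' x₀ x, norm_sub_rev x x₀]) (neg_nonpos.2 hp)

theorem setIntegral_ball_two_mul_norm_rpow_neg_le_of_four_mul_le (hp : 0 ≤ p) {x₀ : E} {R : ℝ}
    (hR : 0 < R) (hx₀ : 4 * R ≤ ‖x₀‖) :
    ∫ x in ball x₀ (2 * R), ‖x‖ ^ (-p) ∂μ ≤
      4 ^ finrank ℝ E * (5 / 2) ^ p *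
        ((‖x₀‖ + R) ^ (-p) * ((R / 2) ^ finrank ℝ E * μ.real (ball 0 1))) := by
  have hweight : (‖x₀‖ - 2 * R) ^ (-p) ≤ (5 / 2) ^ p * (‖x₀‖ + R) ^ (-p) := calc
    (‖x₀‖ - 2 * R) ^ (-p) ≤ (2 / 5 * (‖x₀‖ + R)) ^ (-p) :=
      rpow_le_rpow_of_nonpos (by positivity) (by linarith) (neg_nonpos.2 hp)
    _ = (5 / 2) ^ p * (‖x₀‖ + R) ^ (-p) := by
      rw [mul_rpow (by norm_num) (by positivity), rpow_neg (by norm_num), ← inv_rpow (by norm_num)]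
      norm_num
  calc ∫ x in ball x₀ (2 * R), ‖x‖ ^ (-p) ∂μ
      ≤ (‖x₀‖ - 2 * R) ^ (-p) * ((2 * R) ^ finrank ℝ E * μ.real (ball 0 1)) :=
        setIntegral_ball_norm_rpow_neg_le_of_lt_norm μ hp (by positivity) (by linarith)
    _ ≤ (5 / 2) ^ p * (‖x₀‖ + R) ^ (-p) * ((2 * R) ^ finrank ℝ E * μ.real (ball 0 1)) := by
        gcongr
    _ = _ := by rw [show 2 * R = 4 * (R / 2) by ring, mul_pow]; ring

theorem setIntegral_ball_two_mul_norm_rpow_neg_le_of_norm_le_four_mul [Nontrivial E] (hp : 0 ≤ p)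
    (hpd : p < finrank ℝ E) {x₀ : E} {R : ℝ} (hR : 0 < R) (hx₀ : ‖x₀‖ ≤ 4 * R) :
    ∫ x in ball x₀ (2 * R), ‖x‖ ^ (-p) ∂μ ≤
      finrank ℝ E / (finrank ℝ E - p) * (6 ^ ((finrank ℝ E : ℝ) - p) * 5 ^ p * 2 ^ finrank ℝ E) *
        ((‖x₀‖ + R) ^ (-p) * ((R / 2) ^ finrank ℝ E * μ.real (ball 0 1))) := by
  set d := finrank ℝ E
  have hd : 0 < (d : ℝ) - p := sub_pos.2 hpd
  have hscale : (‖x₀‖ + 2 * R) ^ ((d : ℝ) - p) ≤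
      6 ^ ((d : ℝ) - p) * 5 ^ p * 2 ^ d * ((‖x₀‖ + R) ^ (-p) * (R / 2) ^ d) := calc
    (‖x₀‖ + 2 * R) ^ ((d : ℝ) - p) ≤ (6 * R) ^ ((d : ℝ) - p) :=
      rpow_le_rpow (by positivity) (by linarith) hd.le
    _ = 6 ^ ((d : ℝ) - p) * 5 ^ p * 2 ^ d * ((5 * R) ^ (-p) * (R / 2) ^ d) := by
      rw [mul_rpow (by norm_num) hR.le, mul_rpow (by norm_num) hR.le, rpow_sub hR, rpow_neg hR.le,
        rpow_neg (by norm_num), rpow_natCast, div_pow]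
      field_simp
    _ ≤ _ := by
      have : (5 * R) ^ (-p) ≤ (‖x₀‖ + R) ^ (-p) :=
        rpow_le_rpow_of_nonpos (by positivity) (by linarith) (neg_nonpos.2 hp)
      gcongr
  calc ∫ x in ball x₀ (2 * R), ‖x‖ ^ (-p) ∂μ
      ≤ d / (d - p) * μ.real (ball 0 1) * (‖x₀‖ + 2 * R) ^ ((d : ℝ) - p) :=
        setIntegral_ball_norm_rpow_neg_le μ hpd x₀ (by positivity)
    _ ≤ d / (d - p) * μ.real (ball 0 1) *
          (6 ^ ((d : ℝ) - p) * 5 ^ p * 2 ^ d * ((‖x₀‖ + R) ^ (-p) * (R / 2) ^ d)) := by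
        gcongr
    _ = _ := by ring

end Radial

section HalfSpace

theorem ball_add_smul_subset_ball_inter_halfSpace {E : Type*} [NormedAddCommGroup E]
    [InnerProductSpace ℝ E] {e x₀ : E} (he : ‖e‖ = 1) (hx₀ : 0 ≤ inner ℝ x₀ e) (r : ℝ) :
    ball (x₀ + (r / 2) • e) (r / 2) ⊆ ball x₀ r ∩ {x | 0 < inner ℝ x e} := by
  intro y hy
  set c := x₀ + (r / 2) • e
  rw [mem_ball, dist_eq_norm] at hy
  have hr : 0 < r := by linarith [norm_nonneg (y - c)]
  have hc : ‖c - x₀‖ = r / 2 := by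
    rw [add_sub_cancel_left, norm_smul, he, mul_one, Real.norm_of_nonneg (by linarith)]
  have hce : inner ℝ c e = inner ℝ x₀ e + r / 2 := by
    rw [inner_add_left, real_inner_smul_left, real_inner_self_eq_norm_sq, he]
    ring
  have hyc : -‖y - c‖ ≤ inner ℝ (y - c) e := by
    have := abs_real_inner_le_norm (y - c) e
    rw [he, mul_one] at this
    linarith [neg_abs_le (inner ℝ (y - c) e)]
  refine ⟨?_, ?_⟩
  · rw [mem_ball, dist_eq_norm]
    linarith [norm_sub_le_norm_sub_add_norm_sub y c x₀]
  · rw [mem_ofPred_eq, ← sub_add_cancel y c, inner_add_left]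
    linarith

variable {E : Type*} [NormedAddCommGroup E] [InnerProductSpace ℝ E] [FiniteDimensional ℝ E]
  [MeasurableSpace E] [BorelSpace E] (μ : Measure E) [μ.IsAddHaarMeasure] {p : ℝ}

theorem rpow_neg_mul_le_setIntegral_ball_inter_halfSpace (hp : 0 ≤ p) (hpd : p < finrank ℝ E)
    {e x₀ : E} (he : ‖e‖ = 1) (hx₀ : 0 ≤ inner ℝ x₀ e) {r : ℝ} (hr : 0 < r) :
    (‖x₀‖ + r) ^ (-p) * ((r / 2) ^ finrank ℝ E * μ.real (ball 0 1)) ≤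
      ∫ x in ball x₀ r ∩ {x | 0 < inner ℝ x e}, ‖x‖ ^ (-p) ∂μ := by
  set c := x₀ + (r / 2) • e
  have hsub := ball_add_smul_subset_ball_inter_halfSpace he hx₀ r
  have hbound : ∀ x ∈ ball c (r / 2), (‖x₀‖ + r) ^ (-p) ≤ ‖x‖ ^ (-p) := by
    intro x hx
    obtain ⟨hxr, hxe⟩ := hsub hx
    have hx0 : 0 < ‖x‖ := norm_pos_iff.2 (by rintro rfl; simp at hxe)
    rw [mem_ball, dist_eq_norm] at hxr
    exact rpow_le_rpow_of_nonpos hx0 (by linarith [norm_le_norm_add_norm_sub' x x₀])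
      (neg_nonpos.2 hp)
  calc (‖x₀‖ + r) ^ (-p) * ((r / 2) ^ finrank ℝ E * μ.real (ball 0 1))
      = (‖x₀‖ + r) ^ (-p) * μ.real (ball c (r / 2)) := by
        rw [measureReal_ball_of_pos μ c (half_pos hr)]
    _ ≤ ∫ x in ball c (r / 2), ‖x‖ ^ (-p) ∂μ :=
        setIntegral_ge_of_const_le_real measurableSet_ball measure_ball_lt_top.ne hbound
          (integrableOn_norm_rpow_neg μ hpd isBounded_ball)
    _ ≤ _ := setIntegral_mono_set
        (integrableOn_norm_rpow_neg μ hpd (isBounded_ball.subset inter_subset_left))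
        (ae_of_all _ fun x => rpow_nonneg (norm_nonneg x) _) hsub.eventuallyLE

noncomputable def halfSpaceDoublingConst (d : ℕ) (p : ℝ) : ℝ :=
  max (4 ^ d * (5 / 2) ^ p) (d / (d - p) * (6 ^ ((d : ℝ) - p) * 5 ^ p * 2 ^ d))

theorem halfSpaceDoublingConst_pos (d : ℕ) (p : ℝ) : 0 < halfSpaceDoublingConst d p :=
  lt_max_of_lt_left (by positivity)

theorem setIntegral_ball_inter_halfSpace_norm_rpow_neg_doubling (hp : 0 ≤ p)
    (hpd : p < finrank ℝ E) {e x₀ : E} (he : ‖e‖ = 1) (hx₀ : 0 ≤ inner ℝ x₀ e) {R : ℝ}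
    (hR : 0 < R) :
    ∫ x in ball x₀ (2 * R) ∩ {x | 0 < inner ℝ x e}, ‖x‖ ^ (-p) ∂μ ≤
      halfSpaceDoublingConst (finrank ℝ E) p *
        ∫ x in ball x₀ R ∩ {x | 0 < inner ℝ x e}, ‖x‖ ^ (-p) ∂μ := by
  have : Nontrivial E := ⟨⟨e, 0, by rintro rfl; simp at he⟩⟩
  have hdrop : ∫ x in ball x₀ (2 * R) ∩ {x | 0 < inner ℝ x e}, ‖x‖ ^ (-p) ∂μ ≤
      ∫ x in ball x₀ (2 * R), ‖x‖ ^ (-p) ∂μ :=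
    setIntegral_mono_set (integrableOn_norm_rpow_neg μ hpd isBounded_ball)
      (ae_of_all _ fun x => rpow_nonneg (norm_nonneg x) _) inter_subset_left.eventuallyLE
  have hball : ∫ x in ball x₀ (2 * R), ‖x‖ ^ (-p) ∂μ ≤ halfSpaceDoublingConst (finrank ℝ E) p *
      ((‖x₀‖ + R) ^ (-p) * ((R / 2) ^ finrank ℝ E * μ.real (ball 0 1))) := by
    have hm : 0 ≤ (‖x₀‖ + R) ^ (-p) * ((R / 2) ^ finrank ℝ E * μ.real (ball 0 1)) := by
      positivity
    rcases le_total (4 * R) ‖x₀‖ with hfar | hnear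
    · exact (setIntegral_ball_two_mul_norm_rpow_neg_le_of_four_mul_le μ hp hR hfar).trans
        (mul_le_mul_of_nonneg_right (le_max_left _ _) hm)
    · exact (setIntegral_ball_two_mul_norm_rpow_neg_le_of_norm_le_four_mul μ hp hpd hR hnear).trans
        (mul_le_mul_of_nonneg_right (le_max_right _ _) hm)
  exact hdrop.trans (hball.trans (mul_le_mul_of_nonneg_left
    (rpow_neg_mul_le_setIntegral_ball_inter_halfSpace μ hp hpd he hx₀ hR)
    (halfSpaceDoublingConst_pos _ _).le))

end HalfSpace

theorem stmt_1 (n : ℕ) (hn : 3 ≤ n) (γ : ℝ) (hγ₁ : 0 < 2 * γ)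
    (hγ₂ : 2 * γ < (n : ℝ) - 2) :
    ∃ c : ℝ, 0 < c ∧
      ∀ x₀ : EuclideanSpace ℝ (Fin n), 0 ≤ x₀ ⟨n - 1, by omega⟩ →
        ∀ R : ℝ, 0 < R →
          (∫ x in Metric.ball x₀ (2 * R) ∩
              {x : EuclideanSpace ℝ (Fin n) | 0 < x ⟨n - 1, by omega⟩},
            ‖x‖ ^ (-(2 * γ))) ≤
          c * ∫ x in Metric.ball x₀ R ∩
              {x : EuclideanSpace ℝ (Fin n) | 0 < x ⟨n - 1, by omega⟩},
            ‖x‖ ^ (-(2 * γ)) := by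
  set i : Fin n := ⟨n - 1, by omega⟩
  have hinner (x : EuclideanSpace ℝ (Fin n)) : inner ℝ x (EuclideanSpace.single i 1) = x i := by
    simp [EuclideanSpace.inner_single_right]
  have hpd : 2 * γ < finrank ℝ (EuclideanSpace ℝ (Fin n)) := by
    rw [finrank_euclideanSpace_fin]
    linarith
  refine ⟨halfSpaceDoublingConst n (2 * γ), halfSpaceDoublingConst_pos _ _, fun x₀ hx₀ R hR => ?_⟩
  have := setIntegral_ball_inter_halfSpace_norm_rpow_neg_doubling volume hγ₁.le hpd
    (e := EuclideanSpace.single i 1) (by simp) (by rwa [hinner]) hR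
  simpa only [hinner, finrank_euclideanSpace_fin] using this
end

section
/- Let 1 < q < 2, U > 0, φ ≥ 0, Φ = φ - U. Then 0 ≤ φ^q - U^q - qU^{q-1}Φ ≤ q(q-1) (∫₀¹∫₀¹ (1-θ₁θ₂)^{q-2} θ₁ dθ₁ dθ₂) U^{q-2} Φ². -/
/-!
With `t = φ / U` the remainder equals `U ^ q * (t ^ q - 1 - q * (t - 1))`. Bernoulli's inequality
gives the lower bound; for the upper one, concavity of `t ^ (q - 1)` gives
`t ^ q = t * t ^ (q - 1) ≤ t * (1 + (q - 1) * (t - 1)) = 1 + q * (t - 1) + (q - 1) * (t - 1) ^ 2`.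
Integrating first in `θ₂` (Fubini), the double integral equals `1 / q`, so the constant is `q - 1`.
-/

open MeasureTheory Set Real

section TaylorRemainder

variable {q t U φ : ℝ}

theorem one_add_mul_sub_le_rpow (ht : 0 ≤ t) (hq : 1 ≤ q) : 1 + q * (t - 1) ≤ t ^ q := by
  simpa using one_add_mul_self_le_rpow_one_add (s := t - 1) (by linarith) hq

theorem rpow_le_one_add_mul_sub_add_mul_sq (ht : 0 ≤ t) (hq1 : 1 ≤ q) (hq2 : q ≤ 2) :
    t ^ q ≤ 1 + q * (t - 1) + (q - 1) * (t - 1) ^ 2 := by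
  have hconcave : t ^ (q - 1) ≤ 1 + (q - 1) * (t - 1) := by
    simpa using rpow_one_add_le_one_add_mul_self (s := t - 1) (by linarith) (p := q - 1)
      (by linarith) (by linarith)
  calc t ^ q = t * t ^ (q - 1) := by
        rw [← rpow_one_add' ht (by linarith), add_sub_cancel]
    _ ≤ t * (1 + (q - 1) * (t - 1)) := mul_le_mul_of_nonneg_left hconcave ht
    _ = 1 + q * (t - 1) + (q - 1) * (t - 1) ^ 2 := by ring

theorem rpow_sub_rpow_sub_mul_eq (hU : 0 < U) (hφ : 0 ≤ φ) :
    φ ^ q - U ^ q - q * U ^ (q - 1) * (φ - U) = U ^ q * ((φ / U) ^ q - 1 - q * (φ / U - 1)) := by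
  rw [div_rpow hφ hU.le, rpow_sub_one hU.ne']
  field_simp

theorem rpow_sub_two_mul_sq (hU : 0 < U) : U ^ (q - 2) * (φ - U) ^ 2 = U ^ q * (φ / U - 1) ^ 2 := by
  rw [rpow_sub hU, rpow_two]
  field_simp

theorem rpow_sub_rpow_sub_mul_nonneg (hq : 1 ≤ q) (hU : 0 < U) (hφ : 0 ≤ φ) :
    0 ≤ φ ^ q - U ^ q - q * U ^ (q - 1) * (φ - U) := by
  rw [rpow_sub_rpow_sub_mul_eq hU hφ]
  have := one_add_mul_sub_le_rpow (div_nonneg hφ hU.le) hq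
  exact mul_nonneg (rpow_nonneg hU.le q) (by linarith)

theorem rpow_sub_rpow_sub_mul_le (hq1 : 1 ≤ q) (hq2 : q ≤ 2) (hU : 0 < U) (hφ : 0 ≤ φ) :
    φ ^ q - U ^ q - q * U ^ (q - 1) * (φ - U) ≤ (q - 1) * U ^ (q - 2) * (φ - U) ^ 2 := by
  rw [rpow_sub_rpow_sub_mul_eq hU hφ, mul_assoc, rpow_sub_two_mul_sq hU, mul_left_comm]
  have := rpow_le_one_add_mul_sub_add_mul_sq (div_nonneg hφ hU.le) hq1 hq2
  exact mul_le_mul_of_nonneg_left (by linarith) (rpow_nonneg hU.le q)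

end TaylorRemainder

section DoubleIntegral

variable {q : ℝ}

theorem integral_one_sub_mul_rpow_mul (hq : 1 < q) (a : ℝ) :
    ∫ x in (0 : ℝ)..1, (1 - a * x) ^ (q - 2) * a = (1 - (1 - a) ^ (q - 1)) / (q - 1) := by
  rw [intervalIntegral.integral_mul_const, mul_comm,
    intervalIntegral.mul_integral_comp_sub_mul (f := fun x => x ^ (q - 2)),
    integral_rpow (Or.inl (by linarith))]
  norm_num [show q - 2 + 1 = q - 1 by ring]

theorem integral_one_sub_one_sub_rpow_div (hq : 1 < q) :
    ∫ y in (0 : ℝ)..1, (1 - (1 - y) ^ (q - 1)) / (q - 1) = 1 / q := by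
  have hint : IntervalIntegrable (fun y : ℝ => (1 - y) ^ (q - 1)) volume 0 1 := by
    simpa using ((intervalIntegral.intervalIntegrable_rpow' (a := 0) (b := 1) (r := q - 1)
      (by linarith)).comp_sub_left 1).symm
  rw [intervalIntegral.integral_div, intervalIntegral.integral_sub intervalIntegrable_const hint,
    intervalIntegral.integral_comp_sub_left (fun y => y ^ (q - 1)),
    integral_rpow (Or.inl (by linarith))]
  have hq₁ : q - 1 ≠ 0 := by linarith
  have hq₀ : q ≠ 0 := by linarith
  norm_num [zero_rpow hq₀]
  field_simp

/-- The `+ 1` covers `2 ≤ q`, where the power is bounded by `1` instead. -/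
theorem one_sub_mul_rpow_mul_le {x y : ℝ} (hx₀ : 0 ≤ x) (hx₁ : x < 1) (hy₀ : 0 ≤ y) (hy₁ : y ≤ 1) :
    (1 - y * x) ^ (q - 2) * y ≤ (1 - x) ^ (q - 2) + 1 := by
  have hyx : y * x ≤ x := mul_le_of_le_one_left hx₀ hy₁
  have hpos : 0 < 1 - x := by linarith
  have hle : (1 - y * x) ^ (q - 2) ≤ (1 - x) ^ (q - 2) + 1 := by
    rcases le_total (q - 2) 0 with hq | hq
    · have := rpow_le_rpow_of_nonpos hpos (by linarith) hq (y := 1 - y * x)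
      linarith [rpow_nonneg hpos.le (q - 2)]
    · have := rpow_le_one (by nlinarith) (by nlinarith) hq (x := 1 - y * x)
      linarith [rpow_nonneg hpos.le (q - 2)]
  calc (1 - y * x) ^ (q - 2) * y ≤ (1 - y * x) ^ (q - 2) :=
        mul_le_of_le_one_right (rpow_nonneg (by linarith) _) hy₁
    _ ≤ (1 - x) ^ (q - 2) + 1 := hle

theorem integrable_one_sub_mul_rpow_mul (hq : 1 < q) :
    Integrable (fun p : ℝ × ℝ => (1 - p.2 * p.1) ^ (q - 2) * p.2)
      ((volume.restrict (Ioo (0 : ℝ) 1)).prod (volume.restrict (Ioo (0 : ℝ) 1))) := by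
  have hsing : IntegrableOn (fun x : ℝ => (1 - x) ^ (q - 2)) (Ioo 0 1) := by
    have := ((intervalIntegral.intervalIntegrable_rpow' (a := 0) (b := 1) (r := q - 2)
      (by linarith)).comp_sub_left 1).symm
    simp only [sub_zero, sub_self] at this
    exact (intervalIntegrable_iff_integrableOn_Ioo_of_le zero_le_one).mp this
  refine ((hsing.comp_fst _).add (integrable_const 1)).mono'
    (by fun_prop : Measurable _).aestronglyMeasurable ?_
  rw [Measure.prod_restrict, ae_restrict_iff' (measurableSet_Ioo.prod measurableSet_Ioo)]
  refine ae_of_all _ fun ⟨x, y⟩ ⟨⟨hx₀, hx₁⟩, ⟨hy₀, hy₁⟩⟩ => ?_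
  have hyx : y * x < 1 := by nlinarith
  rw [Real.norm_of_nonneg (mul_nonneg (rpow_nonneg (by linarith) _) hy₀.le)]
  exact one_sub_mul_rpow_mul_le hx₀.le hx₁ hy₀.le hy₁.le

theorem integral_integral_one_sub_mul_rpow_mul (hq : 1 < q) :
    ∫ θ₂ in Ioo (0 : ℝ) 1, ∫ θ₁ in Ioo (0 : ℝ) 1, (1 - θ₁ * θ₂) ^ (q - 2) * θ₁ = 1 / q := by
  rw [integral_integral_swap (integrable_one_sub_mul_rpow_mul hq)]
  simp_rw [← integral_Ioc_eq_integral_Ioo, ← intervalIntegral.integral_of_le zero_le_one,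
    integral_one_sub_mul_rpow_mul hq]
  exact integral_one_sub_one_sub_rpow_div hq

end DoubleIntegral

theorem stmt_10 (q U φ : ℝ) (hq1 : 1 < q) (hq2 : q < 2) (hU : 0 < U) (hφ : 0 ≤ φ) :
    0 ≤ φ ^ q - U ^ q - q * U ^ (q - 1) * (φ - U) ∧
    φ ^ q - U ^ q - q * U ^ (q - 1) * (φ - U) ≤
      q * (q - 1) *
        (∫ θ₂ in Set.Ioo (0 : ℝ) 1, ∫ θ₁ in Set.Ioo (0 : ℝ) 1,
          (1 - θ₁ * θ₂) ^ (q - 2) * θ₁) * U ^ (q - 2) * (φ - U) ^ 2 := by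
  refine ⟨rpow_sub_rpow_sub_mul_nonneg hq1.le hU hφ, ?_⟩
  have hq : q ≠ 0 := (zero_lt_one.trans hq1).ne'
  calc _ ≤ (q - 1) * U ^ (q - 2) * (φ - U) ^ 2 := rpow_sub_rpow_sub_mul_le hq1.le hq2.le hU hφ
    _ = _ := by rw [integral_integral_one_sub_mul_rpow_mul hq1]; field_simp
end
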